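/- Let f be Lipschitz and x a periodic point with I(x) ≠ 0. Then there exists a cylinder k containing x such that inf{I(y) : y ∈ k periodic} = I(x). -/

import Mathlib

open MeasureTheory Filter Real Topology
open scoped ENNReal

noncomputable section

abbrev X (d : ℕ) : Type := ℕ → Fin d

def shift {d : ℕ} (x : X d) : X d := fun n => x (n + 1)

def birkhoff {d : ℕ} (f : X d → ℝ) (n : ℕ) (x : X d) : ℝ :=
  ∑ i ∈ Finset.range n, f (shift^[i] x)

def IsPeriodic {d : ℕ} (x : X d) : Prop := ∃ n, 0 < n ∧ shift^[n] x = x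

def minPer {d : ℕ} (x : X d) : ℕ := Function.minimalPeriod shift x

def beta {d : ℕ} (f : X d → ℝ) : ℝ :=
  sSup {r : ℝ | ∃ μ : Measure (X d), IsProbabilityMeasure μ ∧ μ.map shift = μ ∧ r = ∫ x, f x ∂μ}

def Ifun {d : ℕ} (f : X d → ℝ) (x : X d) : ℝ :=
  (minPer x : ℝ) * beta f - birkhoff f (minPer x) x

def dtheta {d : ℕ} (θ : ℝ) (x y : X d) : ℝ :=
  letI : Decidable (x = y) := Classical.dec _
  if h : x = y then 0 else θ ^ Nat.find (Function.ne_iff.mp h)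

def LipWrt {d : ℕ} (θ C : ℝ) (f : X d → ℝ) : Prop :=
  ∀ x y, |f x - f y| ≤ C * dtheta θ x y

def periodize {d : ℕ} (n : ℕ) (w : Fin (n + 1) → Fin d) : X d :=
  fun i => w ⟨i % (n + 1), Nat.mod_lt i (Nat.succ_pos n)⟩

def pressure {d : ℕ} (g : X d → ℝ) : ℝ :=
  Filter.limsup (fun n : ℕ =>
    Real.log (∑ w : Fin (n + 1) → Fin d, Real.exp (birkhoff g (n + 1) (periodize n w))) / ((n : ℝ) + 1))
    Filter.atTop

def zetaVal {d : ℕ} (f : X d → ℝ) (c s : ℝ) (k : X d → ℝ) : ℝ :=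
  ∑' n : ℕ, ∑ w : Fin (n + 1) → Fin d,
    Real.exp (c * s * birkhoff f (n + 1) (periodize n w) - ((n : ℝ) + 1) * pressure (fun y => c * f y))
      * (birkhoff k (n + 1) (periodize n w) / ((n : ℝ) + 1))

def etaVal {d : ℕ} (f : X d → ℝ) (c : ℝ) (N : ℕ) (k : X d → ℝ) : ℝ :=
  ∑ n ∈ Finset.range N, ∑ w : Fin (n + 1) → Fin d,
    Real.exp (c * birkhoff f (n + 1) (periodize n w)) * (birkhoff k (n + 1) (periodize n w) / ((n : ℝ) + 1))

def piVal {d : ℕ} (f : X d → ℝ) (c : ℝ) (N : ℕ) (k : X d → ℝ) : ℝ :=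
  ∑ n ∈ Finset.range N, ∑ w : Fin (n + 1) → Fin d,
    Real.exp (c * birkhoff f (n + 1) (periodize n w) - ((n : ℝ) + 1) * pressure (fun y => c * f y))
      * (birkhoff k (n + 1) (periodize n w) / ((n : ℝ) + 1))

def cylSet {d : ℕ} (m : ℕ) (w : Fin m → Fin d) : Set (X d) :=
  {x : X d | ∀ i : Fin m, x i = w i}

def Itilde {d : ℕ} (θ : ℝ) (f : X d → ℝ) (x : X d) : EReal :=
  ⨆ ε : {e : ℝ // 0 < e},
    sInf {r : EReal | ∃ y : X d, IsPeriodic y ∧ dtheta θ x y ≤ ε.1 ∧ r = ((Ifun f y : ℝ) : EReal)}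

def orbitMeasure {d : ℕ} (x : X d) : Measure (X d) :=
  ((minPer x : ℝ≥0∞))⁻¹ • ∑ i ∈ Finset.range (minPer x), Measure.dirac (shift^[i] x)

/-!
Let `n` be the minimal period of `x` and `K = C θ / (1 - θ)`, the Lipschitz error of a Birkhoff
sum along two orbits that agree on the summation window. Any orbit segment of length `ℓ` is
shadowed by a periodic orbit of period `ℓ`, so its Birkhoff sum is at most `ℓ β(f) + K`; in
particular `I ≥ 0` on periodic points, hence `I(x) > 0`. Take the cylinder of length `(q + 1) n`
around `x`. A periodic `y` in it with period `p ≤ q n` agrees with `x` on `n + p` symbols and so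
equals `x`. If `p > q n`, split the Birkhoff sum of `y` after `q n` steps: the first part is within
`K` of `q` times that of `x`, the rest is at most `(p - q n) β(f) + K`, so `I(y) ≥ q I(x) - 2K`,
which is at least `I(x)` once `q` is large.
-/

open Function

theorem Function.Periodic.eq_of_eqOn_lt_add {α : Type*} {x y : ℕ → α} {n p : ℕ}
    (hn : 0 < n) (hp : 0 < p) (hx : Periodic x n) (hy : Periodic y p)
    (h : ∀ j < n + p, x j = y j) : x = y := by
  have hxp : Periodic x p := fun i => by
    have hi : i % n < n := Nat.mod_lt i hn
    calc x (i + p) = x (i % n + p + i / n * n) := by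
          rw [add_right_comm, Nat.mod_add_div']
      _ = x (i % n + p) := hx.nat_mul _ _
      _ = y (i % n + p) := h _ (by omega)
      _ = y (i % n) := hy _
      _ = x (i % n) := (h _ (by omega)).symm
      _ = x i := hx.map_mod_nat i
  funext j
  have hj : j % p < p := Nat.mod_lt j hp
  rw [← hxp.map_mod_nat, ← hy.map_mod_nat, h _ (by omega)]

section Shift

variable {d : ℕ}

theorem shift_iterate_apply (x : X d) (k j : ℕ) : (shift^[k] x) j = x (j + k) := by
  induction k generalizing x with
  | zero => rfl
  | succ k ih => rw [iterate_succ_apply, ih]; rfl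

theorem isPeriodicPt_shift_iff {x : X d} {p : ℕ} :
    IsPeriodicPt shift p x ↔ Periodic x p := by
  simp only [IsPeriodicPt, IsFixedPt, funext_iff, shift_iterate_apply, Periodic]

theorem measurable_shift : Measurable (shift (d := d)) :=
  measurable_pi_lambda _ fun j => measurable_pi_apply (j + 1)

theorem minPer_pos {x : X d} (hx : IsPeriodic x) : 0 < minPer x := by
  obtain ⟨n, hn, hxn⟩ := hx
  exact IsPeriodicPt.minimalPeriod_pos hn hxn

theorem isPeriodicPt_minPer (x : X d) : IsPeriodicPt shift (minPer x) x :=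
  isPeriodicPt_minimalPeriod shift x

theorem eq_of_mem_cylSet_of_minPer_add_le {x y : X d} {m : ℕ} (hx : IsPeriodic x)
    (hy : IsPeriodic y) (hyx : y ∈ cylSet m fun i => x i) (hm : minPer x + minPer y ≤ m) :
    y = x :=
  ((isPeriodicPt_shift_iff.mp (isPeriodicPt_minPer x)).eq_of_eqOn_lt_add (minPer_pos hx)
    (minPer_pos hy) (isPeriodicPt_shift_iff.mp (isPeriodicPt_minPer y))
    fun j hj => (hyx ⟨j, by omega⟩).symm).symm

end Shift

section Birkhoff

variable {d : ℕ}

theorem birkhoff_add (f : X d → ℝ) (a b : ℕ) (z : X d) :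
    birkhoff f (a + b) z = birkhoff f a z + birkhoff f b (shift^[a] z) :=
  birkhoffSum_add shift f a b z

theorem birkhoff_mul_of_isPeriodicPt (f : X d → ℝ) {n : ℕ} {x : X d}
    (hx : IsPeriodicPt shift n x) (q : ℕ) : birkhoff f (q * n) x = q * birkhoff f n x := by
  induction q with
  | zero => simp [birkhoff]
  | succ q ih =>
    rw [Nat.succ_mul, birkhoff_add, ih, (hx.const_mul q).eq]
    push_cast
    ring

end Birkhoff

section Beta

variable {d : ℕ}

theorem exists_invariant_integral_eq_birkhoff_div {z : X d} {p : ℕ} (hp : 0 < p)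
    (hz : IsPeriodicPt shift p z) (f : X d → ℝ) :
    ∃ μ : Measure (X d), IsProbabilityMeasure μ ∧ μ.map shift = μ ∧
      ∫ x, f x ∂μ = birkhoff f p z / p := by
  set ν : Measure (X d) := ∑ i ∈ Finset.range p, Measure.dirac (shift^[i] z) with hν_def
  have hp' : (p : ℝ≥0∞) ≠ 0 := by exact_mod_cast hp.ne'
  have hν : ν.map shift = ν := by
    obtain ⟨k, rfl⟩ := Nat.exists_eq_add_one_of_ne_zero hp.ne'
    rw [hν_def, ← Measure.mapₗ_apply_of_measurable measurable_shift, map_sum]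
    simp only [Measure.mapₗ_apply_of_measurable measurable_shift,
      Measure.map_dirac' measurable_shift, ← iterate_succ_apply' shift]
    rw [Finset.sum_range_succ, hz.eq, Finset.sum_range_succ' _ k, iterate_zero, id]
  refine ⟨(p : ℝ≥0∞)⁻¹ • ν, ⟨?_⟩, by rw [Measure.map_smul, hν], ?_⟩
  · simp [ν, Measure.finsetSum_apply, ENNReal.inv_mul_cancel hp']
  · rw [integral_smul_measure, integral_finsetSum_measure fun i _ => integrable_dirac (by simp)]
    simp [birkhoff, integral_dirac, div_eq_inv_mul]

variable {f : X d → ℝ} {B : ℝ}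

theorem bddAbove_invariant_integrals (hB : ∀ z, |f z| ≤ B) :
    BddAbove {r : ℝ | ∃ μ : Measure (X d), IsProbabilityMeasure μ ∧ μ.map shift = μ ∧
      r = ∫ x, f x ∂μ} := by
  refine ⟨B, ?_⟩
  rintro _ ⟨μ, hμ, -, rfl⟩
  have := norm_integral_le_of_norm_le_const (μ := μ) (f := f) (.of_forall hB)
  rw [probReal_univ, mul_one] at this
  exact (le_abs_self _).trans this

theorem birkhoff_le_mul_beta (hB : ∀ z, |f z| ≤ B) {z : X d} {p : ℕ} (hp : 0 < p)
    (hz : IsPeriodicPt shift p z) : birkhoff f p z ≤ p * beta f := by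
  obtain ⟨μ, hμ, hμ_inv, hμ_int⟩ := exists_invariant_integral_eq_birkhoff_div hp hz f
  have hle : birkhoff f p z / p ≤ beta f :=
    le_csSup (bddAbove_invariant_integrals hB) ⟨μ, hμ, hμ_inv, hμ_int.symm⟩
  rwa [div_le_iff₀ (by exact_mod_cast hp), mul_comm] at hle

theorem Ifun_nonneg (hB : ∀ z, |f z| ≤ B) {x : X d} (hx : IsPeriodic x) : 0 ≤ Ifun f x :=
  sub_nonneg.mpr (birkhoff_le_mul_beta hB (minPer_pos hx) (isPeriodicPt_minPer x))

end Beta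

section Lipschitz

variable {d : ℕ} {θ C : ℝ} {f : X d → ℝ}

theorem dtheta_nonneg (hθ : 0 ≤ θ) (x y : X d) : 0 ≤ dtheta θ x y := by
  unfold dtheta
  split
  · exact le_rfl
  · positivity

theorem dtheta_le_pow (hθ0 : 0 ≤ θ) (hθ1 : θ ≤ 1) {x y : X d} {k : ℕ}
    (h : ∀ j < k, x j = y j) : dtheta θ x y ≤ θ ^ k := by
  unfold dtheta
  split
  · positivity
  · refine pow_le_pow_of_le_one hθ0 hθ1 ((Nat.le_find_iff _ _).mpr fun j hj => ?_)
    simpa using h j hj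

theorem LipWrt.mono (hf : LipWrt θ C f) {C' : ℝ} (hC : C ≤ C') (hθ : 0 ≤ θ) :
    LipWrt θ C' f := fun x y =>
  (hf x y).trans (mul_le_mul_of_nonneg_right hC (dtheta_nonneg hθ x y))

theorem LipWrt.abs_apply_le (hf : LipWrt θ C f) (hC : 0 ≤ C) (hθ0 : 0 ≤ θ) (hθ1 : θ ≤ 1)
    (x₀ z : X d) : |f z| ≤ |f x₀| + C := by
  have h := (hf z x₀).trans (mul_le_of_le_one_right hC
    (by simpa using dtheta_le_pow hθ0 hθ1 (x := z) (y := x₀) (k := 0) (by simp)))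
  calc |f z| = |f x₀ + (f z - f x₀)| := by ring_nf
    _ ≤ |f x₀| + |f z - f x₀| := abs_add_le _ _
    _ ≤ |f x₀| + C := by linarith

theorem dtheta_shift_iterate_le (hθ0 : 0 ≤ θ) (hθ1 : θ ≤ 1) {x y : X d} {ℓ : ℕ}
    (h : ∀ j < ℓ, y j = x j) (i : ℕ) : dtheta θ (shift^[i] y) (shift^[i] x) ≤ θ ^ (ℓ - i) :=
  dtheta_le_pow hθ0 hθ1 fun j hj => by
    rw [shift_iterate_apply, shift_iterate_apply]
    exact h _ (by omega)

theorem sum_range_pow_sub_le (hθ0 : 0 ≤ θ) (hθ1 : θ < 1) (ℓ : ℕ) :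
    ∑ i ∈ Finset.range ℓ, θ ^ (ℓ - i) ≤ θ / (1 - θ) :=
  calc ∑ i ∈ Finset.range ℓ, θ ^ (ℓ - i) = ∑ i ∈ Finset.Ico 1 (ℓ + 1), θ ^ i := by
        rw [Finset.sum_Ico_eq_sum_range, ← Finset.sum_range_reflect, Nat.add_sub_cancel]
        refine Finset.sum_congr rfl fun i hi => ?_
        rw [Finset.mem_range] at hi
        congr 1
        omega
    _ ≤ θ ^ 1 / (1 - θ) := geom_sum_Ico_le_of_lt_one hθ0 hθ1
    _ = θ / (1 - θ) := by rw [pow_one]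

theorem LipWrt.abs_birkhoff_sub_le (hf : LipWrt θ C f) (hC : 0 ≤ C) (hθ0 : 0 ≤ θ)
    (hθ1 : θ < 1) {x y : X d} {ℓ : ℕ} (h : ∀ j < ℓ, y j = x j) :
    |birkhoff f ℓ y - birkhoff f ℓ x| ≤ C * (θ / (1 - θ)) :=
  calc |birkhoff f ℓ y - birkhoff f ℓ x|
      = |∑ i ∈ Finset.range ℓ, (f (shift^[i] y) - f (shift^[i] x))| := by
        rw [birkhoff, birkhoff, Finset.sum_sub_distrib]
    _ ≤ ∑ i ∈ Finset.range ℓ, |f (shift^[i] y) - f (shift^[i] x)| :=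
        Finset.abs_sum_le_sum_abs _ _
    _ ≤ ∑ i ∈ Finset.range ℓ, C * θ ^ (ℓ - i) := Finset.sum_le_sum fun i _ =>
        (hf _ _).trans (mul_le_mul_of_nonneg_left (dtheta_shift_iterate_le hθ0 hθ1.le h i) hC)
    _ = C * ∑ i ∈ Finset.range ℓ, θ ^ (ℓ - i) := (Finset.mul_sum _ _ _).symm
    _ ≤ C * (θ / (1 - θ)) := mul_le_mul_of_nonneg_left (sum_range_pow_sub_le hθ0 hθ1 ℓ) hC

theorem periodize_apply_of_lt {n : ℕ} (w : Fin (n + 1) → Fin d) {j : ℕ} (hj : j < n + 1) :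
    periodize n w j = w ⟨j, hj⟩ := by
  simp [periodize, Nat.mod_eq_of_lt hj]

theorem isPeriodicPt_periodize (n : ℕ) (w : Fin (n + 1) → Fin d) :
    IsPeriodicPt shift (n + 1) (periodize n w) :=
  isPeriodicPt_shift_iff.mpr fun j => by simp [periodize, Nat.add_mod_right]

theorem LipWrt.birkhoff_le_mul_beta_add (hf : LipWrt θ C f) (hC : 0 ≤ C) (hθ0 : 0 ≤ θ)
    (hθ1 : θ < 1) (z : X d) (ℓ : ℕ) :
    birkhoff f ℓ z ≤ ℓ * beta f + C * (θ / (1 - θ)) := by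
  have hθ1' : 0 < 1 - θ := sub_pos.mpr hθ1
  rcases ℓ with _ | n
  · simp only [birkhoff, Finset.range_zero, Finset.sum_empty, CharP.cast_eq_zero, zero_mul,
      zero_add]
    positivity
  · have hper := birkhoff_le_mul_beta (hf.abs_apply_le hC hθ0 hθ1.le z) n.succ_pos
      (isPeriodicPt_periodize n fun i => z i)
    have hclose := hf.abs_birkhoff_sub_le hC hθ0 hθ1 (x := periodize n fun i => z i) (y := z)
      fun j hj => (periodize_apply_of_lt (fun i => z i) hj).symm
    linarith [(abs_le.mp hclose).2]

theorem LipWrt.mul_Ifun_sub_le_Ifun (hf : LipWrt θ C f) (hC : 0 ≤ C) (hθ0 : 0 ≤ θ)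
    (hθ1 : θ < 1) {x y : X d} (q : ℕ) (hyx : ∀ j < q * minPer x, y j = x j)
    (hqy : q * minPer x ≤ minPer y) :
    q * Ifun f x - 2 * (C * (θ / (1 - θ))) ≤ Ifun f y := by
  obtain ⟨ℓ, hℓ⟩ := Nat.exists_eq_add_of_le hqy
  have hsplit := birkhoff_add f (q * minPer x) ℓ y
  have hhead := hf.abs_birkhoff_sub_le hC hθ0 hθ1 hyx
  have htail := hf.birkhoff_le_mul_beta_add hC hθ0 hθ1 (shift^[q * minPer x] y) ℓ
  have hx := birkhoff_mul_of_isPeriodicPt f (isPeriodicPt_minPer x) q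
  rw [Ifun, Ifun, hℓ, hsplit]
  rw [hx] at hhead
  push_cast
  linarith [(abs_le.mp hhead).2]

end Lipschitz

theorem stmt9_general (d : ℕ) (θ C : ℝ) (hθ0 : 0 < θ) (hθ1 : θ < 1)
    (f : X d → ℝ) (hf : LipWrt θ C f) (x : X d) (hx : IsPeriodic x) (hIx : Ifun f x ≠ 0) :
    ∃ (m : ℕ) (w : Fin m → Fin d), x ∈ cylSet m w ∧
      sInf {r : ℝ | ∃ y ∈ cylSet m w, IsPeriodic y ∧ r = Ifun f y} = Ifun f x := by
  have hf' : LipWrt θ (max C 0) f := hf.mono (le_max_left C 0) hθ0.le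
  set K := max C 0 * (θ / (1 - θ))
  have hIpos : 0 < Ifun f x :=
    (Ifun_nonneg (hf'.abs_apply_le (le_max_right C 0) hθ0.le hθ1.le x) hx).lt_of_ne' hIx
  obtain ⟨q, hq⟩ := exists_nat_ge ((Ifun f x + 2 * K) / Ifun f x)
  rw [div_le_iff₀ hIpos] at hq
  refine ⟨(q + 1) * minPer x, fun i => x i, fun _ => rfl,
    IsLeast.csInf_eq ⟨⟨x, fun _ => rfl, hx, rfl⟩, ?_⟩⟩
  rintro _ ⟨y, hyx, hy, rfl⟩
  rcases le_or_gt (minPer y) (q * minPer x) with hshort | hlong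
  · rw [eq_of_mem_cylSet_of_minPer_add_le hx hy hyx (by rw [add_one_mul]; omega)]
  · have := hf'.mul_Ifun_sub_le_Ifun (le_max_right C 0) hθ0.le hθ1 q
      (fun j hj => hyx ⟨j, by rw [add_one_mul]; omega⟩) hlong.le
    linarith

theorem stmt9 (d : ℕ) (hd : 0 < d) (θ C : ℝ) (hθ0 : 0 < θ) (hθ1 : θ < 1)
    (f : X d → ℝ) (hf : LipWrt θ C f) (x : X d) (hx : IsPeriodic x) (hIx : Ifun f x ≠ 0) :
    ∃ (m : ℕ) (w : Fin m → Fin d), x ∈ cylSet m w ∧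
      sInf {r : ℝ | ∃ y ∈ cylSet m w, IsPeriodic y ∧ r = Ifun f y} = Ifun f x :=
  stmt9_general d θ C hθ0 hθ1 f hf x hx hIx
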